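/- arXiv:1106.3190 — 3 statements merged into one kernel-verified Lean document; each statement's English description precedes it below -/
import Mathlib

section
/- Let Γ be a projective nonsingular irreducible complex curve of genus γ ≥ 3 which is Petri with respect to pencils. Then H^1(Γ, L^2) = 0 for every invertible sheaf L on Γ with h^0(L) ≥ 2. -/
/-!
We formalize statements of Bruno–Sernesi, "The symmetric square of a curve and
the Petri map".

A smooth projective irreducible complex curve `Γ` is presented through its
field of rational functions `K` (a `ℂ`-algebra which is a field), the divisor
map `div : K → Div(Γ)`, a chosen canonical divisor, and the Riemann–Roch spaces
`RR D = H⁰(Γ, O(D)) ⊆ K` of divisors.  Divisors on `Γ` are finitely supported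
`ℤ`-valued functions on the set of (closed) points.  Invertible sheaves are
represented by divisors (every line bundle is `O(D)` for some divisor `D`, and
all the notions below are invariant under linear equivalence).
-/

open Module Function
open scoped TensorProduct

noncomputable section

/-- The degree of a divisor. -/
def divDegree {Point : Type} (D : Point →₀ ℤ) : ℤ := D.sum fun _ n => n

/-- A smooth projective irreducible curve over `ℂ`, presented via its function
field, divisors of rational functions, a canonical divisor and its
Riemann–Roch spaces. -/
structure CurveData (Point K : Type) [Field K] [Algebra ℂ K] : Type where
  /-- the genus of the curve -/
  genus : ℕ
  /-- the divisor of a (nonzero) rational function -/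
  div : K → (Point →₀ ℤ)
  /-- a canonical divisor, i.e. the divisor of a rational 1-form; `O(canonical) = ω_Γ` -/
  canonical : Point →₀ ℤ
  /-- the Riemann–Roch space `H⁰(Γ, O(D)) ⊆ K` of a divisor `D` -/
  RR : (Point →₀ ℤ) → Submodule ℂ K
  mem_RR : ∀ (D : Point →₀ ℤ) (f : K), f ∈ RR D ↔ f = 0 ∨ 0 ≤ D + div f
  div_mul : ∀ f g : K, f ≠ 0 → g ≠ 0 → div (f * g) = div f + div g
  div_algebraMap : ∀ c : ℂ, c ≠ 0 → div ((algebraMap ℂ K) c) = 0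
  finiteDimensional_RR : ∀ D, FiniteDimensional ℂ (RR D)
  degree_div : ∀ f : K, f ≠ 0 → divDegree (div f) = 0
  degree_canonical : divDegree canonical = 2 * (genus : ℤ) - 2
  /-- the Riemann–Roch theorem: `h⁰(D) - h⁰(K - D) = deg D + 1 - γ` -/
  riemannRoch : ∀ D : Point →₀ ℤ,
    (finrank ℂ (RR D) : ℤ) - (finrank ℂ (RR (canonical - D)) : ℤ)
      = divDegree D + 1 - (genus : ℤ)

namespace CurveData

variable {Point K : Type} [Field K] [Algebra ℂ K]

/-- The divisor given by a single point. -/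
def pt (x : Point) : Point →₀ ℤ := Finsupp.single x 1

/-- The multiplication map `V ⊗ W → K` induced by the multiplication of the
function field on two subspaces `V, W ⊆ K`.  For `V ⊆ H⁰(L)` and
`W ⊆ H⁰(M)` it takes values in `H⁰(LM) ⊆ K`, so its injectivity is equivalent
to that of the multiplication map `V ⊗ W → H⁰(LM)`. -/
def mulMap (V W : Submodule ℂ K) : (V ⊗[ℂ] W) →ₗ[ℂ] K :=
  TensorProduct.lift (((LinearMap.mul ℂ K).comp V.subtype).compl₂ W.subtype)

variable (C : CurveData Point K)

/-- `h⁰(D) = dim H⁰(Γ, O(D))`. -/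
def h0 (D : Point →₀ ℤ) : ℕ := finrank ℂ (C.RR D)

/-- `h¹(D) = dim H¹(Γ, O(D))`, computed via Serre duality as `h⁰(K - D)`. -/
def h1 (D : Point →₀ ℤ) : ℕ := finrank ℂ (C.RR (C.canonical - D))

/-- `(O(D), V)` is a linear pencil (a `g¹_n` with `n = deg D`): `V` is a
2-dimensional subspace of `H⁰(O(D))`. -/
def IsPencil (D : Point →₀ ℤ) (V : Submodule ℂ K) : Prop :=
  V ≤ C.RR D ∧ finrank ℂ V = 2

/-- The Petri map `μ₀(L,V) : V ⊗ H⁰(ω_Γ L⁻¹) → H⁰(ω_Γ)` of the pencil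
`(L,V) = (O(D), V)`, viewed as a map into `K`; its injectivity is equivalent to
the injectivity of the Petri map. -/
def petriMap (D : Point →₀ ℤ) (V : Submodule ℂ K) :
    (V ⊗[ℂ] (C.RR (C.canonical - D))) →ₗ[ℂ] K :=
  mulMap V (C.RR (C.canonical - D))

/-- `Γ` is Petri with respect to pencils: the Petri map of every linear pencil
(of any degree) is injective. -/
def PetriWrtPencils : Prop :=
  ∀ (D : Point →₀ ℤ) (V : Submodule ℂ K), C.IsPencil D V →
    Function.Injective (C.petriMap D V)

/-- `x` is a base point of the linear series `(O(D), V)`. -/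
def IsBasePoint (D : Point →₀ ℤ) (V : Submodule ℂ K) (x : Point) : Prop :=
  V ≤ C.RR (D - pt x)

/-- `(O(D), V)` is base-point free. -/
def BasePointFree (D : Point →₀ ℤ) (V : Submodule ℂ K) : Prop :=
  ∀ x : Point, ¬ C.IsBasePoint D V x

/-- `B` is the fixed divisor of the linear series `(O(D), V)`: the largest
effective divisor contained in all divisors of the series. -/
def IsFixedDivisor (D : Point →₀ ℤ) (V : Submodule ℂ K) (B : Point →₀ ℤ) : Prop :=
  0 ≤ B ∧ V ≤ C.RR (D - B) ∧ ∀ B' : Point →₀ ℤ, 0 ≤ B' → V ≤ C.RR (D - B') → B' ≤ B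

/-- `(O(D), V)` is complete, i.e. `V = H⁰(O(D))`. -/
def IsComplete (D : Point →₀ ℤ) (V : Submodule ℂ K) : Prop :=
  V = C.RR D

/-- The pencil `(O(D), V)` is neutral with respect to `x + y ∈ Γ₂`, i.e.
`V(-x-y) ≠ 0`. -/
def IsNeutral (D : Point →₀ ℤ) (V : Submodule ℂ K) (x y : Point) : Prop :=
  V ⊓ C.RR (D - pt x - pt y) ≠ ⊥

/-- The pencil `(O(D), V)` has only simple ramification: every divisor of the
pencil contains each point with multiplicity at most 2, and contains at most
one double point. -/
def SimpleRamification (D : Point →₀ ℤ) (V : Submodule ℂ K) : Prop :=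
  ∀ f : K, f ∈ V → f ≠ 0 →
    (∀ z : Point, (D + C.div f) z ≤ 2) ∧ {z : Point | (D + C.div f) z = 2}.Subsingleton

end CurveData

end

/-- Proposition 2.1(i).  Let `Γ` be a projective nonsingular
irreducible complex curve of genus `γ ≥ 3` which is Petri with respect to
pencils.  Then `H¹(Γ, L²) = 0` for every invertible sheaf `L` on `Γ` with
`h⁰(L) ≥ 2`.  Here `L = O(D)`, so `L² = O(2D)` and `h¹` is computed by Serre
duality. -/
theorem h1_square_eq_zero_of_petriWrtPencils
    (Point K : Type) [Field K] [Algebra ℂ K] (C : CurveData Point K)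
    (hγ : 3 ≤ C.genus) (hPetri : C.PetriWrtPencils)
    (D : Point →₀ ℤ) (hD : 2 ≤ C.h0 D) :
    C.h1 (2 • D) = 0 := by
  classical
  haveI : ∀ E, FiniteDimensional ℂ (C.RR E) := C.finiteDimensional_RR
  by_contra hne
  rw [CurveData.h1] at hne
  -- get a nonzero element f of H⁰(K - 2D)
  have hpos : 0 < finrank ℂ (C.RR (C.canonical - 2 • D)) := Nat.pos_of_ne_zero hne
  haveI : Nontrivial (C.RR (C.canonical - 2 • D)) := Module.finrank_pos_iff.mp hpos
  obtain ⟨f0, hf0⟩ := exists_ne (0 : C.RR (C.canonical - 2 • D))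
  set f : K := (f0 : K) with hfdef
  have hfmem : f ∈ C.RR (C.canonical - 2 • D) := f0.2
  have hfne : f ≠ 0 := fun h => hf0 (Subtype.ext h)
  have hfdiv : 0 ≤ (C.canonical - 2 • D) + C.div f := by
    rcases (C.mem_RR _ f).mp hfmem with h | h
    · exact absurd h hfne
    · exact h
  -- two linearly independent sections of H⁰(D)
  rw [CurveData.h0] at hD
  set bD := Module.finBasis ℂ (C.RR D) with hbD
  set w : Fin 2 → K := fun i => ((bD (Fin.castLE hD i) : C.RR D) : K) with hw
  have hwli : LinearIndependent ℂ w := by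
    have h1 : LinearIndependent ℂ (fun i : Fin 2 => bD (Fin.castLE hD i)) :=
      bD.linearIndependent.comp _ (Fin.castLE_injective hD)
    exact h1.map' (C.RR D).subtype (Submodule.ker_subtype _)
  have hwmem : ∀ i, w i ∈ C.RR D := fun i => (bD (Fin.castLE hD i)).2
  have hwne : ∀ i, w i ≠ 0 := fun i => hwli.ne_zero i
  have hwdiv : ∀ i, 0 ≤ D + C.div (w i) := by
    intro i
    rcases (C.mem_RR D (w i)).mp (hwmem i) with h | h
    · exact absurd h (hwne i)
    · exact h
  -- the pencil
  set V : Submodule ℂ K := Submodule.span ℂ (Set.range w) with hV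
  have hVle : V ≤ C.RR D := by
    rw [hV, Submodule.span_le]
    rintro _ ⟨i, rfl⟩
    exact hwmem i
  have hVpencil : C.IsPencil D V := by
    refine ⟨hVle, ?_⟩
    rw [hV, finrank_span_eq_card hwli]
    simp
  -- the members w i * f of H⁰(K - D)
  have hmulmem : ∀ i, w i * f ∈ C.RR (C.canonical - D) := by
    intro i
    refine (C.mem_RR _ _).mpr (Or.inr ?_)
    rw [C.div_mul _ _ (hwne i) hfne]
    have key : (C.canonical - D) + (C.div (w i) + C.div f)
        = (D + C.div (w i)) + ((C.canonical - 2 • D) + C.div f) := by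
      rw [two_smul]; abel
    rw [key]
    exact add_nonneg (hwdiv i) hfdiv
  set W : Submodule ℂ K := C.RR (C.canonical - D) with hWdef
  -- basis of V
  set b : Basis (Fin 2) ℂ V := Basis.span hwli with hb
  have hbcoe : ∀ i, ((b i : V) : K) = w i := by
    intro i; rw [hb, Basis.span_apply]
  -- the tensor
  set a0 : W := ⟨w 1 * f, hmulmem 1⟩ with ha0
  set a1 : W := ⟨w 0 * f, hmulmem 0⟩ with ha1
  set t : V ⊗[ℂ] W := b 0 ⊗ₜ[ℂ] a0 - b 1 ⊗ₜ[ℂ] a1 with ht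
  have hmap : C.petriMap D V t = 0 := by
    rw [ht, map_sub]
    have e : ∀ (v : V) (u : W), C.petriMap D V (v ⊗ₜ[ℂ] u) = (v : K) * (u : K) := by
      intro v u
      simp [CurveData.petriMap, CurveData.mulMap]
    rw [e, e, hbcoe, hbcoe, ha0, ha1]
    ring_nf
  have ht0 : t = 0 := by
    have := hPetri D V hVpencil
    have h0 : C.petriMap D V t = C.petriMap D V 0 := by rw [hmap, map_zero]
    exact this h0
  -- apply the coordinate functional
  set ψ : (V ⊗[ℂ] W) →ₗ[ℂ] W :=
    TensorProduct.lift ((LinearMap.lsmul ℂ W).comp (b.coord 0)) with hψ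
  have hψt : ψ t = a0 := by
    rw [ht, map_sub]
    have e : ∀ (v : V) (u : W), ψ (v ⊗ₜ[ℂ] u) = (b.coord 0 v) • u := by
      intro v u; simp [hψ]
    rw [e, e]
    simp [Basis.coord_apply, Basis.repr_self, Finsupp.single_apply]
  have : a0 = 0 := by rw [← hψt, ht0, map_zero]
  have : w 1 * f = 0 := congrArg Subtype.val this
  exact (mul_ne_zero (hwne 1) hfne) this
end

section
/- Let Γ be a projective nonsingular irreducible complex curve of genus γ ≥ 3 which is Petri with respect to pencils. Then H^1(Γ, L^2(−x)) = 0 for every invertible sheaf L on Γ with h^0(L) ≥ 2 and for every point x ∈ Γ. -/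
/-!
We formalize statements of Bruno–Sernesi, "The symmetric square of a curve and
the Petri map".

A smooth projective irreducible complex curve `Γ` is presented through its
field of rational functions `K` (a `ℂ`-algebra which is a field), the divisor
map `div : K → Div(Γ)`, a chosen canonical divisor, and the Riemann–Roch spaces
`RR D = H⁰(Γ, O(D)) ⊆ K` of divisors.  Divisors on `Γ` are finitely supported
`ℤ`-valued functions on the set of (closed) points.  Invertible sheaves are
represented by divisors (every line bundle is `O(D)` for some divisor `D`, and
all the notions below are invariant under linear equivalence).
-/

open Module Function
open scoped TensorProduct

/-!
Let `0 ≠ f ∈ H⁰(K - 2D + x)` and put `E = D - x` if `h⁰(D - x) ≥ 2`, `E = D` otherwise. In both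
cases `H⁰(E) · f ⊆ H⁰(K - D)`: in the first directly, in the second because `x` is then not a base
point of `|D|`, hence by Riemann–Roch a base point of `|K - D + x|`. For a pencil `V ⊆ H⁰(E)` with
basis `s, t`, the nonzero tensor `s ⊗ tf - t ⊗ sf` lies in the kernel of the Petri map.
-/

lemma TensorProduct.eq_zero_of_basis_tmul_eq_basis_tmul {R M N ι : Type*} [CommSemiring R]
    [AddCommMonoid M] [Module R M] [AddCommMonoid N] [Module R N] [DecidableEq ι]
    (b : Module.Basis ι R M) {i j : ι} (hij : i ≠ j) {n₁ n₂ : N}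
    (h : b i ⊗ₜ[R] n₁ = b j ⊗ₜ[R] n₂) : n₁ = 0 := by
  have hi := congr_arg (fun z => TensorProduct.equivFinsuppOfBasisLeft b z i) h
  simpa [TensorProduct.equivFinsuppOfBasisLeft_apply_tmul_apply, Finsupp.single_apply,
    Ne.symm hij] using hi

namespace CurveData

variable {Point K : Type} [Field K] [Algebra ℂ K] (C : CurveData Point K)

attribute [instance] CurveData.finiteDimensional_RR

lemma divDegree_sub (A B : Point →₀ ℤ) : divDegree (A - B) = divDegree A - divDegree B :=
  Finsupp.sum_sub_index fun _ _ _ => rfl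

lemma divDegree_pt (x : Point) : divDegree (pt x) = 1 :=
  Finsupp.sum_single_index rfl

lemma sub_pt_le (D : Point →₀ ℤ) (x : Point) : D - pt x ≤ D :=
  sub_le_self D (Finsupp.single_nonneg.mpr zero_le_one)

lemma RR_mono {A B : Point →₀ ℤ} (h : A ≤ B) : C.RR A ≤ C.RR B := by
  intro f hf
  rcases (C.mem_RR A f).1 hf with hf0 | hAf
  · exact (C.mem_RR B f).2 (Or.inl hf0)
  · exact (C.mem_RR B f).2 (Or.inr (hAf.trans (add_le_add_left h _)))

lemma mul_mem_RR {A B : Point →₀ ℤ} {f g : K} (hf : f ∈ C.RR A) (hg : g ∈ C.RR B) :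
    f * g ∈ C.RR (A + B) := by
  by_cases hf0 : f = 0
  · simp [hf0]
  by_cases hg0 : g = 0
  · simp [hg0]
  have hAf := ((C.mem_RR A f).1 hf).resolve_left hf0
  have hBg := ((C.mem_RR B g).1 hg).resolve_left hg0
  refine (C.mem_RR _ _).2 (Or.inr ?_)
  rw [C.div_mul f g hf0 hg0]
  calc (0 : Point →₀ ℤ) ≤ (A + C.div f) + (B + C.div g) := add_nonneg hAf hBg
    _ = A + B + (C.div f + C.div g) := by abel

lemma RR_canonical_sub_sub_pt_eq {D : Point →₀ ℤ} {x : Point} (h : C.h0 (D - pt x) < C.h0 D) :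
    C.RR (C.canonical - (D - pt x)) = C.RR (C.canonical - D) := by
  have hle : C.RR (C.canonical - D) ≤ C.RR (C.canonical - (D - pt x)) :=
    C.RR_mono (sub_le_sub_left (sub_pt_le D x) _)
  have hrr := C.riemannRoch D
  have hrr_pt := C.riemannRoch (D - pt x)
  rw [divDegree_sub, divDegree_pt] at hrr_pt
  unfold h0 at h
  have := Submodule.finrank_mono hle
  exact (Submodule.eq_of_le_of_finrank_eq hle (by omega)).symm

lemma exists_isPencil {D : Point →₀ ℤ} (hD : 2 ≤ C.h0 D) : ∃ V, C.IsPencil D V := by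
  obtain ⟨g, hg⟩ := exists_linearIndependent_of_le_finrank hD
  refine ⟨Submodule.span ℂ (Set.range ((C.RR D).subtype ∘ g)), ?_, ?_⟩
  · rw [Submodule.span_le]
    rintro _ ⟨i, rfl⟩
    exact (g i).2
  · rw [finrank_span_eq_card (hg.map' _ (Submodule.ker_subtype _)), Fintype.card_fin]

lemma eq_zero_of_forall_mul_mem_RR_canonical_sub (hPetri : C.PetriWrtPencils)
    {D : Point →₀ ℤ} {V : Submodule ℂ K} (hV : C.IsPencil D V) {f : K}
    (hf : ∀ v ∈ V, v * f ∈ C.RR (C.canonical - D)) : f = 0 := by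
  have := Module.finite_of_finrank_eq_succ hV.2
  let b := Module.finBasisOfFinrankEq ℂ V hV.2
  let w (i : Fin 2) : C.RR (C.canonical - D) := ⟨b i * f, hf _ (b i).2⟩
  have hker : C.petriMap D V (b 0 ⊗ₜ w 1 - b 1 ⊗ₜ w 0) = 0 := by
    rw [map_sub]
    change (b 0 : K) * (b 1 * f) - b 1 * (b 0 * f) = 0
    ring
  have htensor : b 0 ⊗ₜ w 1 = b 1 ⊗ₜ w 0 :=
    sub_eq_zero.1 (hPetri D V hV (hker.trans (map_zero _).symm))
  have hw : (b 1 : K) * f = 0 :=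
    congr_arg Subtype.val (TensorProduct.eq_zero_of_basis_tmul_eq_basis_tmul b (by decide) htensor)
  exact (mul_eq_zero.1 hw).resolve_left (by simpa using b.ne_zero 1)

end CurveData

theorem h1_square_minus_point_eq_zero_of_petriWrtPencils_general
    (Point K : Type) [Field K] [Algebra ℂ K] (C : CurveData Point K)
    (hPetri : C.PetriWrtPencils)
    (D : Point →₀ ℤ) (hD : 2 ≤ C.h0 D) (x : Point) :
    C.h1 (2 • D - CurveData.pt x) = 0 := by
  open CurveData in
  obtain ⟨E, hED, hE, hEK⟩ : ∃ E ≤ D, 2 ≤ C.h0 E ∧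
      C.RR (E + (C.canonical - (2 • D - pt x))) ≤ C.RR (C.canonical - D) := by
    by_cases hDx : 2 ≤ C.h0 (D - pt x)
    · refine ⟨D - pt x, sub_pt_le D x, hDx, le_of_eq (congr_arg C.RR ?_)⟩
      rw [two_nsmul]; abel
    · refine ⟨D, le_rfl, hD, le_of_eq ?_⟩
      rw [← C.RR_canonical_sub_sub_pt_eq (x := x) (by omega), two_nsmul]
      congr 1; abel
  obtain ⟨V, hVE, hV⟩ := C.exists_isPencil hE
  rw [h1, Submodule.finrank_eq_zero, Submodule.eq_bot_iff]
  intro f hf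
  exact C.eq_zero_of_forall_mul_mem_RR_canonical_sub hPetri ⟨hVE.trans (C.RR_mono hED), hV⟩
    fun v hv => hEK (C.mul_mem_RR (hVE hv) hf)

/-- Proposition 2.1(ii).  Let `Γ` be a projective nonsingular
irreducible complex curve of genus `γ ≥ 3` which is Petri with respect to
pencils.  Then `H¹(Γ, L²(-x)) = 0` for every invertible sheaf `L` on `Γ` with
`h⁰(L) ≥ 2` and every point `x ∈ Γ`.  Here `L = O(D)`, so `L²(-x) = O(2D - x)`
and `h¹` is computed by Serre duality. -/
theorem h1_square_minus_point_eq_zero_of_petriWrtPencils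
    (Point K : Type) [Field K] [Algebra ℂ K] (C : CurveData Point K)
    (hγ : 3 ≤ C.genus) (hPetri : C.PetriWrtPencils)
    (D : Point →₀ ℤ) (hD : 2 ≤ C.h0 D) (x : Point) :
    C.h1 (2 • D - CurveData.pt x) = 0 :=
  h1_square_minus_point_eq_zero_of_petriWrtPencils_general Point K C hPetri D hD x
end

section
/- Let X be an integral projective complex curve of arithmetic genus g ≥ 4 whose only singularity is an ordinary node z̄, with normalization ν: Γ → X where Γ has genus γ = g−1 and ν^{-1}(z̄) = {x,y}. If Γ is Petri with respect to pencils and the multiplication map M: ν^*V ⊗ H^0(ω_Γ (ν^*L)^{-1}(x+y)) → H^0(ω_Γ(x+y)) is injective for every g^1_n on Γ of the form (ν^*L, ν^*V) for which x is not a base point, then X is Petri with respect to generalized g^1_n's. -/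
/-!
We formalize statements of Bruno–Sernesi, "The symmetric square of a curve and
the Petri map".

A smooth projective irreducible complex curve `Γ` is presented through its
field of rational functions `K` (a `ℂ`-algebra which is a field), the divisor
map `div : K → Div(Γ)`, a chosen canonical divisor, and the Riemann–Roch spaces
`RR D = H⁰(Γ, O(D)) ⊆ K` of divisors.  Divisors on `Γ` are finitely supported
`ℤ`-valued functions on the set of (closed) points.  Invertible sheaves are
represented by divisors (every line bundle is `O(D)` for some divisor `D`, and
all the notions below are invariant under linear equivalence).
-/

open Module Function
open scoped TensorProduct

noncomputable section

/-- Evaluation data on the curve `Γ`: for each divisor `D` and point `z` of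
`Γ`, a linear functional `evalAt D z` on `H⁰(Γ, O(D)) = RR D`, the value at
`z` of a section (with respect to a local trivialization of `O(D)` at `z`,
canonical up to a nonzero scalar); its kernel consists exactly of the sections
vanishing at `z`, and it is multiplicative on products of sections. -/
structure EvalData (Point K : Type) [Field K] [Algebra ℂ K]
    (C : CurveData Point K) : Type where
  /-- evaluation at `z` of sections of `O(D)` -/
  evalAt : (D : Point →₀ ℤ) → Point → (↥(C.RR D) →ₗ[ℂ] ℂ)
  evalAt_eq_zero_iff : ∀ (D : Point →₀ ℤ) (z : Point) (f : C.RR D),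
    evalAt D z f = 0 ↔ (f : K) ∈ C.RR (D - CurveData.pt z)
  evalAt_mul : ∀ (D E : Point →₀ ℤ) (z : Point) (f : C.RR D) (g : C.RR E)
    (h : (f : K) * (g : K) ∈ C.RR (D + E)),
    evalAt (D + E) z ⟨(f : K) * (g : K), h⟩ = evalAt D z f * evalAt E z g

namespace EvalData

variable {Point K : Type} [Field K] [Algebra ℂ K] {C : CurveData Point K}

/-!
Let `X` be the integral projective curve with one ordinary node `z̄` obtained
from `Γ` by identifying the two distinct points `x` and `y`
(`ν : Γ → X` is the normalization, `ν⁻¹(z̄) = {x, y}`, and the arithmetic genus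
of `X` is `γ + 1`).  A torsion-free rank-1 sheaf `L` of degree `n` on `X` is
described by a divisor `D` of degree `n` on `Γ` together with a gluing datum
`c = (c₁, c₂) ∈ ℂ² \ {0}`: for `c₁ ≠ 0 ≠ c₂`, `L` is the invertible sheaf with
`ν^*L = O(D)` whose sections are the `f ∈ H⁰(Γ, O(D))` with
`c₁ f(x) = c₂ f(y)`; for `c = (1,0)` (resp. `c = (0,1)`) it is the
non-invertible sheaf `ν_*(O(D-x))` (resp. `ν_*(O(D-y))`), of the same degree
`n`.
-/

/-- `H⁰(X, L)` of a torsion-free rank-1 sheaf on the nodal curve `X` given by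
the divisor `D` and the gluing datum `c`. -/
def XSections (Ev : EvalData Point K C) (x y : Point) (D : Point →₀ ℤ)
    (c : ℂ × ℂ) : Submodule ℂ K :=
  Submodule.map (C.RR D).subtype
    (LinearMap.ker (c.1 • Ev.evalAt D x - c.2 • Ev.evalAt D y))

/-- `Hom_X(L, ω_X)` for the torsion-free rank-1 sheaf on `X` given by `(D, c)`:
using `ν^*ω_X = ω_Γ(x+y)`, it is the space of the sections
`g ∈ H⁰(Γ, ω_Γ(x+y) ⊗ O(-D))` with `c₂ g(x) + c₁ g(y) = 0` (this is the
condition that multiplication by `g` maps `H⁰(X,L)` into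
`H⁰(X, ω_X) = {h ∈ H⁰(ω_Γ(x+y)) : h(x) + h(y) = 0}`). -/
def XHom (Ev : EvalData Point K C) (x y : Point) (D : Point →₀ ℤ)
    (c : ℂ × ℂ) : Submodule ℂ K :=
  Submodule.map (C.RR (C.canonical + CurveData.pt x + CurveData.pt y - D)).subtype
    (LinearMap.ker
      (c.2 • Ev.evalAt (C.canonical + CurveData.pt x + CurveData.pt y - D) x +
       c.1 • Ev.evalAt (C.canonical + CurveData.pt x + CurveData.pt y - D) y))

/-- The nodal curve `X` (obtained from `Γ` by identifying `x` and `y`) is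
Petri with respect to generalized `g¹_n`'s: for every generalized `g¹_n`
`(L, V)` on `X` — i.e. a torsion-free rank-1 sheaf `L` of degree `n` given by
a pair `(D, c)` and a 2-dimensional subspace `V ⊆ H⁰(X, L)` — the Petri map
`μ₀(V) : V ⊗ Hom_X(L, ω_X) → H⁰(ω_X)` (realized as a multiplication map into
`K`) is injective. -/
def PetriGenPencils (Ev : EvalData Point K C) (x y : Point) (n : ℤ) : Prop :=
  ∀ (D : Point →₀ ℤ) (c : ℂ × ℂ) (V : Submodule ℂ K),
    divDegree D = n → c ≠ 0 → V ≤ Ev.XSections x y D c →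
    Module.finrank ℂ V = 2 →
    Function.Injective (CurveData.mulMap V (Ev.XHom x y D c))

end EvalData

end


section Aux

open CurveData

variable {Point K : Type} [Field K] [Algebra ℂ K]

lemma mulMap_inj_of_le (V W W' : Submodule ℂ K) (h : W ≤ W')
    (hinj : Function.Injective (mulMap V W')) :
    Function.Injective (mulMap V W) := by
  have heq : mulMap V W
      = (mulMap V W') ∘ₗ (LinearMap.lTensor V (Submodule.inclusion h)) := by
    apply TensorProduct.ext'
    intro v w
    rfl
  rw [heq]
  exact hinj.comp (Module.Flat.lTensor_preserves_injective_linearMap _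
    (Submodule.inclusion_injective h))

lemma mem_RR_sub_two (C : CurveData Point K) {D : Point →₀ ℤ} {x y : Point}
    (hxy : x ≠ y) {f : K} (hx : f ∈ C.RR (D - pt x)) (hy : f ∈ C.RR (D - pt y)) :
    f ∈ C.RR (D - pt x - pt y) := by
  rw [C.mem_RR] at hx hy ⊢
  rcases hx with h0 | hx
  · exact Or.inl h0
  rcases hy with h0 | hy
  · exact Or.inl h0
  right
  rw [Finsupp.le_def] at hx hy ⊢
  intro z
  have hxz := hx z
  have hyz := hy z
  classical
  simp only [Finsupp.coe_zero, Pi.zero_apply, Finsupp.add_apply, Finsupp.sub_apply,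
    pt, Finsupp.single_apply] at hxz hyz ⊢
  split_ifs at hxz hyz ⊢ with h1 h2
  · exact absurd (h1.trans h2.symm) hxy
  all_goals omega

end Aux

open CurveData in
/-- Corollary 7.7.  Let `X` be an integral projective
complex curve of arithmetic genus `g ≥ 4` whose only singularity is an
ordinary node `z̄`, with normalization `ν : Γ → X`, where `Γ` has genus
`γ = g - 1 ≥ 3` and `ν⁻¹(z̄) = {x, y}` with `x ≠ y`.  If `Γ` is Petri with
respect to pencils and the multiplication map
`M : ν^*V ⊗ H⁰(ω_Γ (ν^*L)⁻¹(x+y)) → H⁰(ω_Γ(x+y))` is injective for every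
`g¹_n` on `Γ` of the form `(ν^*L, ν^*V)` (with `L` invertible on `X`, i.e.
with both gluing constants nonzero) for which `x` is not a base point, then
`X` is Petri with respect to generalized `g¹_n`'s. -/
theorem nodal_petri_of_injective_M
    (Point K : Type) [Field K] [Algebra ℂ K] (C : CurveData Point K)
    (hγ : 3 ≤ C.genus) (hPetri : C.PetriWrtPencils)
    (x y : Point) (hxy : x ≠ y) (Ev : EvalData Point K C) (n : ℤ)
    (hM : ∀ (D : Point →₀ ℤ) (c : ℂ × ℂ) (V : Submodule ℂ K),
      divDegree D = n → c.1 ≠ 0 → c.2 ≠ 0 → V ≤ Ev.XSections x y D c →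
      Module.finrank ℂ V = 2 →
      ¬ C.IsBasePoint D V x →
      Function.Injective
        (mulMap V (C.RR (C.canonical + pt x + pt y - D)))) :
    Ev.PetriGenPencils x y n := by
  intro D c V hdeg hc hV hrank
  -- notation for the ambient divisor of XHom
  set E := C.canonical + pt x + pt y - D with hE
  have hXHomle : Ev.XHom x y D c ≤ C.RR E := Submodule.map_subtype_le _ _
  by_cases hc1 : c.1 = 0
  · -- non-invertible case c = (0, c₂)
    have hc2 : c.2 ≠ 0 := by
      intro h2
      exact hc (Prod.ext hc1 h2)
    have hVle : V ≤ C.RR (D - pt y) := by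
      intro f hf
      obtain ⟨g, hg, rfl⟩ := hV hf
      have hg' := LinearMap.mem_ker.mp hg
      simp only [LinearMap.sub_apply, LinearMap.smul_apply, smul_eq_mul, hc1,
        zero_mul, zero_sub, neg_eq_zero, mul_eq_zero] at hg'
      have h0 : Ev.evalAt D y g = 0 := hg'.resolve_left hc2
      exact (Ev.evalAt_eq_zero_iff D y g).mp h0
    have hWle : Ev.XHom x y D c ≤ C.RR (C.canonical - (D - pt y)) := by
      intro g hg
      obtain ⟨h, hh, rfl⟩ := hg
      have hh' := LinearMap.mem_ker.mp hh
      simp only [LinearMap.add_apply, LinearMap.smul_apply, smul_eq_mul, hc1,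
        zero_mul, add_zero, mul_eq_zero] at hh'
      have h0 : Ev.evalAt E x h = 0 := hh'.resolve_left hc2
      have hmem := (Ev.evalAt_eq_zero_iff E x h).mp h0
      have hdiv : E - pt x = C.canonical - (D - pt y) := by
        rw [hE]; abel
      rwa [hdiv] at hmem
    exact mulMap_inj_of_le V _ _ hWle (hPetri (D - pt y) V ⟨hVle, hrank⟩)
  · by_cases hc2 : c.2 = 0
    · -- non-invertible case c = (c₁, 0)
      have hVle : V ≤ C.RR (D - pt x) := by
        intro f hf
        obtain ⟨g, hg, rfl⟩ := hV hf
        have hg' := LinearMap.mem_ker.mp hg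
        simp only [LinearMap.sub_apply, LinearMap.smul_apply, smul_eq_mul, hc2,
          zero_mul, sub_zero, mul_eq_zero] at hg'
        have h0 : Ev.evalAt D x g = 0 := hg'.resolve_left hc1
        exact (Ev.evalAt_eq_zero_iff D x g).mp h0
      have hWle : Ev.XHom x y D c ≤ C.RR (C.canonical - (D - pt x)) := by
        intro g hg
        obtain ⟨h, hh, rfl⟩ := hg
        have hh' := LinearMap.mem_ker.mp hh
        simp only [LinearMap.add_apply, LinearMap.smul_apply, smul_eq_mul, hc2,
          zero_mul, zero_add, mul_eq_zero] at hh'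
        have h0 : Ev.evalAt E y h = 0 := hh'.resolve_left hc1
        have hmem := (Ev.evalAt_eq_zero_iff E y h).mp h0
        have hdiv : E - pt y = C.canonical - (D - pt x) := by
          rw [hE]; abel
        rwa [hdiv] at hmem
      exact mulMap_inj_of_le V _ _ hWle (hPetri (D - pt x) V ⟨hVle, hrank⟩)
    · -- invertible case
      by_cases hbp : C.IsBasePoint D V x
      · -- x is a base point: then V ≤ RR (D - x - y)
        have hVle : V ≤ C.RR (D - pt x - pt y) := by
          intro f hf
          obtain ⟨g, hg, rfl⟩ := hV hf
          have hxmem : (g : K) ∈ C.RR (D - pt x) := hbp hf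
          have hx0 : Ev.evalAt D x g = 0 := (Ev.evalAt_eq_zero_iff D x g).mpr hxmem
          have hg' := LinearMap.mem_ker.mp hg
          simp only [LinearMap.sub_apply, LinearMap.smul_apply, smul_eq_mul, hx0,
            mul_zero, zero_sub, neg_eq_zero, mul_eq_zero] at hg'
          have hy0 : Ev.evalAt D y g = 0 := hg'.resolve_left hc2
          have hymem : (g : K) ∈ C.RR (D - pt y) := (Ev.evalAt_eq_zero_iff D y g).mp hy0
          exact mem_RR_sub_two C hxy hxmem hymem
        have hWle : Ev.XHom x y D c ≤ C.RR (C.canonical - (D - pt x - pt y)) := by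
          have hdiv : C.canonical - (D - pt x - pt y) = E := by rw [hE]; abel
          rw [hdiv]
          exact hXHomle
        exact mulMap_inj_of_le V _ _ hWle (hPetri (D - pt x - pt y) V ⟨hVle, hrank⟩)
      · exact mulMap_inj_of_le V _ _ hXHomle
          (hM D c V hdeg hc1 hc2 hV hrank hbp)
end
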